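/- arXiv:1201.5054 — 5 statements merged into one kernel-verified Lean document; each statement's English description precedes it below -/
import Mathlib

section
/- The quantity H(ω, v₁) = ½(J ω² + M v₁² − 2 L₂ ω v₁) is a first integral of the system ω' = (1/D)(L₁ω + Z v₁ + ρα)(L₂ω − M v₁), v₁' = (1/D)(L₁ω + Z v₁ + ρα)(Jω − L₂v₁), i.e. for any solution (ω(t), v₁(t)) the derivative of H(ω(t), v₁(t)) with respect to t is identically zero. -/
/-!
Writing `H x y = ½ (J x² + M y² − 2 L₂ x y)`, the vector field is `g · (−∂H/∂y, ∂H/∂x)` with the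
scalar factor `g = (L₁ ω + Z v₁ + ρ α) / D`: a rescaled Hamiltonian vector field of `H`. Hence the
derivative of `H` along a solution is `g` times the symplectic pairing of `∇H` with itself, which
vanishes whatever `g` is.
-/

section QuadraticEnergy

variable {a b c : ℝ} {x y : ℝ → ℝ} {t : ℝ}

theorem HasDerivAt.quadratic_energy {x' y' : ℝ} (hx : HasDerivAt x x' t) (hy : HasDerivAt y y' t) :
    HasDerivAt (fun t => (1 / 2) * (a * x t ^ 2 + b * y t ^ 2 - 2 * c * x t * y t))
      ((a * x t - c * y t) * x' + (b * y t - c * x t) * y') t := by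
  refine ((((hx.fun_pow 2).const_mul a).fun_add ((hy.fun_pow 2).const_mul b)).fun_sub
    ((hx.const_mul (2 * c)).fun_mul hy)).const_mul (1 / 2 : ℝ) |>.congr_deriv ?_
  push_cast
  ring

theorem hasDerivAt_quadratic_energy_eq_zero_of_hamiltonian {g : ℝ}
    (hx : HasDerivAt x (g * (c * x t - b * y t)) t)
    (hy : HasDerivAt y (g * (a * x t - c * y t)) t) :
    HasDerivAt (fun t => (1 / 2) * (a * x t ^ 2 + b * y t ^ 2 - 2 * c * x t * y t)) 0 t :=
  (hx.quadratic_energy hy).congr_deriv (by ring)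

end QuadraticEnergy

theorem energy_first_integral_general
    (J M L₁ L₂ Z ρ α : ℝ) (D : ℝ)
    (ω v₁ : ℝ → ℝ)
    (hω : ∀ t, HasDerivAt ω ((1 / D) * (L₁ * ω t + Z * v₁ t + ρ * α) * (L₂ * ω t - M * v₁ t)) t)
    (hv : ∀ t, HasDerivAt v₁ ((1 / D) * (L₁ * ω t + Z * v₁ t + ρ * α) * (J * ω t - L₂ * v₁ t)) t) :
    ∀ t, HasDerivAt
      (fun t => (1 / 2) * (J * ω t ^ 2 + M * v₁ t ^ 2 - 2 * L₂ * ω t * v₁ t)) 0 t :=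
  fun t => hasDerivAt_quadratic_energy_eq_zero_of_hamiltonian (hω t) (hv t)

theorem energy_first_integral
    (J M L₁ L₂ Z ρ α : ℝ) (D : ℝ) (hD : D = M * J - L₂ ^ 2) (hD0 : D ≠ 0)
    (ω v₁ : ℝ → ℝ)
    (hω : ∀ t, HasDerivAt ω ((1 / D) * (L₁ * ω t + Z * v₁ t + ρ * α) * (L₂ * ω t - M * v₁ t)) t)
    (hv : ∀ t, HasDerivAt v₁ ((1 / D) * (L₁ * ω t + Z * v₁ t + ρ * α) * (J * ω t - L₂ * v₁ t)) t) :
    ∀ t, HasDerivAt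
      (fun t => (1 / 2) * (J * ω t ^ 2 + M * v₁ t ^ 2 - 2 * L₂ * ω t * v₁ t)) 0 t :=
  energy_first_integral_general J M L₁ L₂ Z ρ α D ω v₁ hω hv
end

section
/- The reduced system with L₂ = 0 is Hamiltonian for the bracket {·,·} above with Hamiltonian H(ω, v₁) = ½(Jω² + Mv₁²): for every smooth F, the derivative of F along solutions of ω' = −(M/D)(L₁ω + Zv₁ + ρα)v₁, v₁' = (J/D)(L₁ω + Zv₁ + ρα)ω equals {F, H}. -/
/-- Partial derivative with respect to the first coordinate ω. -/
noncomputable def pdω (F : ℝ × ℝ → ℝ) (p : ℝ × ℝ) : ℝ :=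
  deriv (fun x => F (x, p.2)) p.1

/-- Partial derivative with respect to the second coordinate v₁. -/
noncomputable def pdv (F : ℝ × ℝ → ℝ) (p : ℝ × ℝ) : ℝ :=
  deriv (fun y => F (p.1, y)) p.2

/-- The bracket {F₁, F₂} = −(1/D)(L₁ω + Zv₁ + ρα)(∂ωF₁ ∂vF₂ − ∂vF₁ ∂ωF₂). -/
noncomputable def bracket (D L₁ Z ρ α : ℝ) (F₁ F₂ : ℝ × ℝ → ℝ) (p : ℝ × ℝ) : ℝ :=
  -(1 / D) * (L₁ * p.1 + Z * p.2 + ρ * α) *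
    (pdω F₁ p * pdv F₂ p - pdv F₁ p * pdω F₂ p)

lemma fderiv_eq_pd (F : ℝ × ℝ → ℝ) (hF : ContDiff ℝ (⊤ : ℕ∞) F) (p : ℝ × ℝ) (a b : ℝ) :
    fderiv ℝ F p (a, b) = a * pdω F p + b * pdv F p := by
  have hFd : HasFDerivAt F (fderiv ℝ F p) p :=
    (hF.differentiable (by simp) p).hasFDerivAt
  have h1 : HasDerivAt (fun x : ℝ => (x, p.2)) ((1 : ℝ), (0 : ℝ)) p.1 :=
    HasDerivAt.prodMk (hasDerivAt_id p.1) (hasDerivAt_const p.1 p.2)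
  have h2 : HasDerivAt (fun y : ℝ => (p.1, y)) ((0 : ℝ), (1 : ℝ)) p.2 :=
    HasDerivAt.prodMk (hasDerivAt_const p.2 p.1) (hasDerivAt_id p.2)
  have hp : (p.1, p.2) = p := Prod.mk.eta
  have e1 : pdω F p = fderiv ℝ F p (1, 0) := by
    have := hFd.comp_hasDerivAt p.1 (hp ▸ h1)
    exact this.deriv
  have e2 : pdv F p = fderiv ℝ F p (0, 1) := by
    have := hFd.comp_hasDerivAt p.2 (hp ▸ h2)
    exact this.deriv
  have hab : (a, b) = a • ((1 : ℝ), (0 : ℝ)) + b • ((0 : ℝ), (1 : ℝ)) := by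
    simp [Prod.ext_iff]
  rw [hab, map_add, map_smul, map_smul, e1, e2, smul_eq_mul, smul_eq_mul]

theorem reduced_system_hamiltonian
    (J M L₁ Z ρ α : ℝ) (D : ℝ) (hD : D = M * J) (hD0 : D ≠ 0)
    (H : ℝ × ℝ → ℝ) (hH : ∀ p, H p = (1 / 2) * (J * p.1 ^ 2 + M * p.2 ^ 2))
    (ω v₁ : ℝ → ℝ)
    (hω : ∀ t, HasDerivAt ω (-(M / D) * (L₁ * ω t + Z * v₁ t + ρ * α) * v₁ t) t)
    (hv : ∀ t, HasDerivAt v₁ ((J / D) * (L₁ * ω t + Z * v₁ t + ρ * α) * ω t) t)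
    (F : ℝ × ℝ → ℝ) (hF : ContDiff ℝ (⊤ : ℕ∞) F) :
    ∀ t, HasDerivAt (fun t => F (ω t, v₁ t))
      (bracket D L₁ Z ρ α F H (ω t, v₁ t)) t := by
  intro t
  set p : ℝ × ℝ := (ω t, v₁ t) with hp
  have hFd : HasFDerivAt F (fderiv ℝ F p) p :=
    (hF.differentiable (by simp) p).hasFDerivAt
  have hcurve : HasDerivAt (fun t => (ω t, v₁ t))
      (-(M / D) * (L₁ * ω t + Z * v₁ t + ρ * α) * v₁ t,
       (J / D) * (L₁ * ω t + Z * v₁ t + ρ * α) * ω t) t :=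
    HasDerivAt.prodMk (hω t) (hv t)
  have h := hFd.comp_hasDerivAt t hcurve
  -- compute partial derivatives of H
  have hHω : pdω H p = J * p.1 := by
    have : (fun x : ℝ => H (x, p.2)) = fun x : ℝ => (1 / 2) * (J * x ^ 2 + M * p.2 ^ 2) := by
      funext x; simp [hH]
    rw [pdω, this]
    have hd := (((hasDerivAt_pow 2 p.1).const_mul J).add_const (M * p.2 ^ 2)).const_mul (1/2 : ℝ)
    rw [hd.deriv]; push_cast; ring
  have hHv : pdv H p = M * p.2 := by
    have : (fun y : ℝ => H (p.1, y)) = fun y : ℝ => (1 / 2) * (J * p.1 ^ 2 + M * y ^ 2) := by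
      funext y; simp [hH]
    rw [pdv, this]
    have hd := (((hasDerivAt_pow 2 p.2).const_mul M).const_add (J * p.1 ^ 2)).const_mul (1/2 : ℝ)
    rw [hd.deriv]; push_cast; ring
  refine h.congr_deriv (Eq.symm ?_)
  rw [fderiv_eq_pd F hF p, bracket, hHω, hHv]
  show -(1 / D) * (L₁ * ω t + Z * v₁ t + ρ * α) *
      (pdω F p * (M * v₁ t) - pdv F p * (J * ω t)) = _
  field_simp
  ring
end

section
/- With ω, v₁ as in the critical-energy solution (h = h₀, shifted time), define R = (σ/2)√(J/M)(K₂²−1)/K₂, C₁ = 1+K₂², C₂ = K₂²−1. Then the velocity V_C(t) := v₁(t) − R ω(t) equals σ√(2h₀/M)·K₃(4K₂² + C₂²)t / (K₂ (C₁²t² + K₃²)), and in particular V_C(t) → 0 as t → ±∞ and V_C(t) = O(1/t) as |t| → ∞. -/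
/-!
Since `√(2h₀/M) = √(J/M) · √(2h₀/J)`, the velocity `v₁ - R ω` is `σ √(2h₀/M)` times
`(K₂ N_v - C₂ N_ω) / (K₂ C₁ (C₁² t² + K₃²))`, where `N_v`, `N_ω` are the numerators of `v₁` and `ω`.
In `K₂ N_v - C₂ N_ω` the `t²` and constant terms cancel, leaving `C₁ K₃ (4 K₂² + C₂²) t`.
The resulting `t / (C₁² t² + K₃²)` is bounded by `C₁⁻² |1 / t|` for every `t`.
-/

open Filter Asymptotics

lemma Real.sqrt_div_mul_sqrt_div {J M : ℝ} (hJ : 0 < J) (hM : 0 ≤ M) (x : ℝ) :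
    √(J / M) * √(x / J) = √(x / M) := by
  rw [← Real.sqrt_mul (div_nonneg hJ.le hM)]
  congr 1
  field_simp

lemma critical_numerator_identity (C₁ C₂ K₂ K₃ t : ℝ) :
    K₂ * (C₁ ^ 2 * C₂ * t ^ 2 + 4 * K₃ * K₂ * C₁ * t - K₃ ^ 2 * C₂) -
        C₂ * (C₁ ^ 2 * K₂ * t ^ 2 - K₃ * C₁ * C₂ * t - K₂ * K₃ ^ 2) =
      C₁ * (K₃ * (4 * K₂ ^ 2 + C₂ ^ 2) * t) := by
  ring

lemma norm_div_sq_add_le {a b : ℝ} (ha : 0 < a) (hb : 0 ≤ b) (t : ℝ) :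
    ‖t / (a * t ^ 2 + b)‖ ≤ a⁻¹ * ‖1 / t‖ := by
  rcases eq_or_ne t 0 with rfl | ht
  · simp
  have hD : 0 < a * t ^ 2 + b := by positivity
  rw [Real.norm_eq_abs, Real.norm_eq_abs, abs_div, abs_of_pos hD, one_div, abs_inv,
    ← mul_inv, ← one_div, div_le_div_iff₀ hD (by positivity)]
  nlinarith [sq_abs t]

lemma isBigO_div_sq_add {a b : ℝ} (ha : 0 < a) (hb : 0 ≤ b) (l : Filter ℝ) :
    (fun t => t / (a * t ^ 2 + b)) =O[l] (fun t => 1 / t) :=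
  IsBigO.of_bound _ (Eventually.of_forall (norm_div_sq_add_le ha hb))

theorem critical_velocity_formula_general
    (h₀ J M K₂ K₃ σ : ℝ) (hJ : J > 0) (hM : M > 0)
    (hK₂ : K₂ ≠ 0) (hK₃ : K₃ ≠ 0)
    (C₁ C₂ R : ℝ) (hC₁ : C₁ = 1 + K₂ ^ 2) (hC₂ : C₂ = K₂ ^ 2 - 1)
    (hR : R = (σ / 2) * Real.sqrt (J / M) * (K₂ ^ 2 - 1) / K₂)
    (ω v₁ V_C : ℝ → ℝ)
    (hω : ∀ t, ω t = 2 * Real.sqrt (2 * h₀ / J) *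
      ((C₁ ^ 2 * K₂ * t ^ 2 - K₃ * C₁ * C₂ * t - K₂ * K₃ ^ 2) /
        (C₁ * (C₁ ^ 2 * t ^ 2 + K₃ ^ 2))))
    (hv : ∀ t, v₁ t = σ * Real.sqrt (2 * h₀ / M) *
      ((C₁ ^ 2 * C₂ * t ^ 2 + 4 * K₃ * K₂ * C₁ * t - K₃ ^ 2 * C₂) /
        (C₁ * (C₁ ^ 2 * t ^ 2 + K₃ ^ 2))))
    (hVC : ∀ t, V_C t = v₁ t - R * ω t) :
    (∀ t, V_C t = σ * Real.sqrt (2 * h₀ / M) *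
      (K₃ * (4 * K₂ ^ 2 + C₂ ^ 2) * t / (K₂ * (C₁ ^ 2 * t ^ 2 + K₃ ^ 2)))) ∧
    Tendsto V_C atTop (nhds 0) ∧ Tendsto V_C atBot (nhds 0) ∧
    V_C =O[atTop] (fun t => 1 / t) ∧ V_C =O[atBot] (fun t => 1 / t) := by
  have hC₁_pos : 0 < C₁ := by rw [hC₁]; positivity
  have hformula : ∀ t, V_C t = σ * Real.sqrt (2 * h₀ / M) *
      (K₃ * (4 * K₂ ^ 2 + C₂ ^ 2) * t / (K₂ * (C₁ ^ 2 * t ^ 2 + K₃ ^ 2))) := by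
    intro t
    have hD : C₁ ^ 2 * t ^ 2 + K₃ ^ 2 ≠ 0 := by positivity
    rw [hVC, hv, hω, hR, ← hC₂, ← Real.sqrt_div_mul_sqrt_div hJ hM.le]
    field_simp
    linear_combination σ * √(J / M) * √(2 * h₀ / J) * critical_numerator_identity C₁ C₂ K₂ K₃ t
  have hVC_eq : V_C = fun t => σ * √(2 * h₀ / M) * (K₃ * (4 * K₂ ^ 2 + C₂ ^ 2) / K₂) *
      (t / (C₁ ^ 2 * t ^ 2 + K₃ ^ 2)) := by
    funext t
    rw [hformula, mul_div_mul_comm, ← mul_assoc]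
  have hO : ∀ l, V_C =O[l] (fun t => 1 / t) := fun l => hVC_eq ▸
    (isBigO_div_sq_add (pow_pos hC₁_pos 2) (sq_nonneg K₃) l).const_mul_left _
  have htop : Tendsto (fun t : ℝ => 1 / t) atTop (nhds 0) := by
    simpa only [one_div] using tendsto_inv_atTop_zero
  have hbot : Tendsto (fun t : ℝ => 1 / t) atBot (nhds 0) := by
    simpa only [one_div] using tendsto_inv_atBot_zero
  exact ⟨hformula, (hO _).trans_tendsto htop, (hO _).trans_tendsto hbot, hO _, hO _⟩

theorem critical_velocity_formula
    (h₀ J M K₂ K₃ σ : ℝ) (hh₀ : h₀ > 0) (hJ : J > 0) (hM : M > 0)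
    (hK₂ : K₂ ≠ 0) (hK₃ : K₃ ≠ 0) (hσ : σ = 1 ∨ σ = -1)
    (C₁ C₂ R : ℝ) (hC₁ : C₁ = 1 + K₂ ^ 2) (hC₂ : C₂ = K₂ ^ 2 - 1)
    (hR : R = (σ / 2) * Real.sqrt (J / M) * (K₂ ^ 2 - 1) / K₂)
    (ω v₁ V_C : ℝ → ℝ)
    (hω : ∀ t, ω t = 2 * Real.sqrt (2 * h₀ / J) *
      ((C₁ ^ 2 * K₂ * t ^ 2 - K₃ * C₁ * C₂ * t - K₂ * K₃ ^ 2) /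
        (C₁ * (C₁ ^ 2 * t ^ 2 + K₃ ^ 2))))
    (hv : ∀ t, v₁ t = σ * Real.sqrt (2 * h₀ / M) *
      ((C₁ ^ 2 * C₂ * t ^ 2 + 4 * K₃ * K₂ * C₁ * t - K₃ ^ 2 * C₂) /
        (C₁ * (C₁ ^ 2 * t ^ 2 + K₃ ^ 2))))
    (hVC : ∀ t, V_C t = v₁ t - R * ω t) :
    (∀ t, V_C t = σ * Real.sqrt (2 * h₀ / M) *
      (K₃ * (4 * K₂ ^ 2 + C₂ ^ 2) * t / (K₂ * (C₁ ^ 2 * t ^ 2 + K₃ ^ 2)))) ∧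
    Tendsto V_C atTop (nhds 0) ∧ Tendsto V_C atBot (nhds 0) ∧
    V_C =O[atTop] (fun t => 1 / t) ∧ V_C =O[atBot] (fun t => 1 / t) :=
  critical_velocity_formula_general h₀ J M K₂ K₃ σ hJ hM hK₂ hK₃ C₁ C₂ R hC₁ hC₂ hR ω v₁ V_C hω hv
    hVC
end

section
/- In the supercritical case h > h₀ with solution ω(t) = 2√(2h/J)(K₂cosh²(γt) − K₁ sinh(γt)cosh(γt))/Q(t), v₁(t) = σ√(2h/M)((K₂²−1)cosh²(γt) − 2K₁K₂ sinh(γt)cosh(γt) + K₁² sinh²(γt))/Q(t), where Q(t) = (1+K₂²)cosh²(γt) − 2K₁K₂ sinh(γt)cosh(γt) + K₁² sinh²(γt), the limit radii are r± := lim_{t→±∞} v₁(t)/ω(t) = (σ/2)√(J/M)·((K₂ ∓ K₁)² − 1)/(K₂ ∓ K₁), and r₊ ≠ r₋ whenever K₁ ≠ 0 and K₂² − K₁² ≠ −1 (and K₂ ± K₁ ≠ 0). -/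
/-!
Dividing numerator and denominator by `Q t * cosh² (γ t)` gives
`v₁ t / ω t = C * (x² - 1) / x` with `C = (σ / 2) √(J / M)` and `x = K₂ - K₁ tanh (γ t)`.
Since `tanh (γ t) → ±1` as `t → ±∞`, the limits follow by continuity of `x ↦ C (x² - 1) / x`
away from `0`. For `a = K₂ - K₁`, `b = K₂ + K₁` one has `(a² - 1) / a = (b² - 1) / b` iff
`(a - b) (a b + 1) = 0`, i.e. `K₁ = 0` or `K₂² - K₁² = -1`.
-/

open Filter Topology Real

lemma Real.tanh_eq_one_sub_two_div (x : ℝ) : tanh x = 1 - 2 / (exp x ^ 2 + 1) := by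
  have hx : exp x ≠ 0 := (exp_pos x).ne'
  rw [tanh_eq, exp_neg]
  field_simp
  ring

lemma Real.tendsto_tanh_atTop : Tendsto tanh atTop (𝓝 1) := by
  have h : Tendsto (fun x => exp x ^ 2 + 1) atTop atTop :=
    tendsto_atTop_add_const_right _ _ ((tendsto_pow_atTop two_ne_zero).comp tendsto_exp_atTop)
  have := ((tendsto_const_nhds (x := (2 : ℝ))).div_atTop h).const_sub 1
  rw [sub_zero] at this
  exact this.congr fun x => (tanh_eq_one_sub_two_div x).symm

lemma Real.tendsto_tanh_atBot : Tendsto tanh atBot (𝓝 (-1)) := by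
  simpa [Function.comp_def] using (tendsto_tanh_atTop.comp tendsto_neg_atBot_atTop).neg

lemma tendsto_sub_mul_tanh_atTop {γ : ℝ} (hγ : 0 < γ) (a b : ℝ) :
    Tendsto (fun t => a - b * tanh (γ * t)) atTop (𝓝 (a - b)) := by
  simpa using tendsto_const_nhds.sub
    ((tendsto_tanh_atTop.comp (tendsto_id.const_mul_atTop hγ)).const_mul b)

lemma tendsto_sub_mul_tanh_atBot {γ : ℝ} (hγ : 0 < γ) (a b : ℝ) :
    Tendsto (fun t => a - b * tanh (γ * t)) atBot (𝓝 (a + b)) := by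
  simpa using tendsto_const_nhds.sub
    ((tendsto_tanh_atBot.comp (tendsto_id.const_mul_atBot hγ)).const_mul b)

lemma Filter.Tendsto.mul_sq_sub_one_div {α : Type*} {l : Filter α} {u : α → ℝ} {a : ℝ}
    (hu : Tendsto u l (𝓝 a)) (ha : a ≠ 0) (C : ℝ) :
    Tendsto (fun t => C * (u t ^ 2 - 1) / u t) l (𝓝 (C * (a ^ 2 - 1) / a)) :=
  (((hu.pow 2).sub_const 1).const_mul C).div hu ha

lemma sq_sub_one_div_eq_iff {a b : ℝ} (ha : a ≠ 0) (hb : b ≠ 0) :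
    (a ^ 2 - 1) / a = (b ^ 2 - 1) / b ↔ a = b ∨ a * b = -1 := by
  rw [div_eq_div_iff ha hb, ← sub_eq_zero, ← sub_eq_zero (a := a), ← add_eq_zero_iff_eq_neg,
    ← mul_eq_zero]
  constructor <;> intro h <;> linear_combination h

lemma Real.sqrt_div_div_sqrt_div {a J : ℝ} (ha : 0 < a) (hJ : 0 < J) (M : ℝ) :
    √(a / M) / √(a / J) = √(J / M) := by
  rw [← sqrt_div' _ (by positivity)]
  congr 1
  field_simp

lemma supercritical_ratio_eq {h J M σ K₁ K₂ q : ℝ} (hh : 0 < h) (hJ : 0 < J) (hq : q ≠ 0)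
    (x : ℝ) :
    σ * √(2 * h / M) * (((K₂ ^ 2 - 1) * cosh x ^ 2 - 2 * K₁ * K₂ * sinh x * cosh x
        + K₁ ^ 2 * sinh x ^ 2) / q) /
      (2 * √(2 * h / J) * ((K₂ * cosh x ^ 2 - K₁ * sinh x * cosh x) / q)) =
    σ / 2 * √(J / M) * ((K₂ - K₁ * tanh x) ^ 2 - 1) / (K₂ - K₁ * tanh x) := by
  have hsinh : sinh x = tanh x * cosh x := by
    rw [tanh_eq_sinh_div_cosh, div_mul_cancel₀ _ (cosh_pos x).ne']
  have hc : cosh x ^ 2 / q ≠ 0 := div_ne_zero (pow_ne_zero 2 (cosh_pos x).ne') hq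
  calc _ = cosh x ^ 2 / q * (σ * √(2 * h / M) * ((K₂ - K₁ * tanh x) ^ 2 - 1)) /
        (cosh x ^ 2 / q * (2 * √(2 * h / J) * (K₂ - K₁ * tanh x))) := by
        rw [hsinh]; ring
    _ = _ := by
      rw [mul_div_mul_left _ _ hc, mul_div_mul_comm, mul_div_mul_comm σ,
        sqrt_div_div_sqrt_div (by positivity) hJ, mul_div_assoc]

theorem supercritical_limit_radii_general
    (h J M γ σ K₁ K₂ : ℝ) (hh : h > 0) (hJ : J > 0) (hM : M > 0) (hγ : γ > 0)
    (hσ : σ = 1 ∨ σ = -1) (hK₁ : K₁ ≠ 0)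
    (hK₂₁ : K₂ + K₁ ≠ 0) (hK₂₂ : K₂ - K₁ ≠ 0)
    (Q ω v₁ : ℝ → ℝ)
    (hQpos : ∀ t, Q t > 0)
    (hω : ∀ t, ω t = 2 * Real.sqrt (2 * h / J) *
      ((K₂ * Real.cosh (γ * t) ^ 2 - K₁ * Real.sinh (γ * t) * Real.cosh (γ * t)) / Q t))
    (hv : ∀ t, v₁ t = σ * Real.sqrt (2 * h / M) *
      (((K₂ ^ 2 - 1) * Real.cosh (γ * t) ^ 2
        - 2 * K₁ * K₂ * Real.sinh (γ * t) * Real.cosh (γ * t)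
        + K₁ ^ 2 * Real.sinh (γ * t) ^ 2) / Q t)) :
    Tendsto (fun t => v₁ t / ω t) atTop
      (nhds ((σ / 2) * Real.sqrt (J / M) * ((K₂ - K₁) ^ 2 - 1) / (K₂ - K₁))) ∧
    Tendsto (fun t => v₁ t / ω t) atBot
      (nhds ((σ / 2) * Real.sqrt (J / M) * ((K₂ + K₁) ^ 2 - 1) / (K₂ + K₁))) ∧
    (K₂ ^ 2 - K₁ ^ 2 ≠ -1 →
      (σ / 2) * Real.sqrt (J / M) * ((K₂ - K₁) ^ 2 - 1) / (K₂ - K₁) ≠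
      (σ / 2) * Real.sqrt (J / M) * ((K₂ + K₁) ^ 2 - 1) / (K₂ + K₁)) := by
  have hratio : (fun t => v₁ t / ω t) = fun t =>
      σ / 2 * √(J / M) * ((K₂ - K₁ * tanh (γ * t)) ^ 2 - 1) / (K₂ - K₁ * tanh (γ * t)) := by
    funext t
    rw [hv, hω, supercritical_ratio_eq hh hJ (hQpos t).ne']
  have hC : σ / 2 * √(J / M) ≠ 0 := by
    have hσ₀ : σ ≠ 0 := by rcases hσ with rfl | rfl <;> norm_num
    exact mul_ne_zero (div_ne_zero hσ₀ two_ne_zero) (sqrt_pos.mpr (div_pos hJ hM)).ne'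
  refine ⟨?_, ?_, fun hK hlim => ?_⟩
  · rw [hratio]
    exact (tendsto_sub_mul_tanh_atTop hγ K₂ K₁).mul_sq_sub_one_div hK₂₂ _
  · rw [hratio]
    exact (tendsto_sub_mul_tanh_atBot hγ K₂ K₁).mul_sq_sub_one_div hK₂₁ _
  · simp only [mul_div_assoc, mul_right_inj' hC, sq_sub_one_div_eq_iff hK₂₂ hK₂₁] at hlim
    rcases hlim with hab | hab
    · exact hK₁ (by linarith)
    · exact hK (by linear_combination hab)

theorem supercritical_limit_radii
    (h J M γ σ K₁ K₂ : ℝ) (hh : h > 0) (hJ : J > 0) (hM : M > 0) (hγ : γ > 0)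
    (hσ : σ = 1 ∨ σ = -1) (hK₁ : K₁ ≠ 0)
    (hK₂₁ : K₂ + K₁ ≠ 0) (hK₂₂ : K₂ - K₁ ≠ 0)
    (Q ω v₁ : ℝ → ℝ)
    (hQ : ∀ t, Q t = (1 + K₂ ^ 2) * Real.cosh (γ * t) ^ 2
      - 2 * K₁ * K₂ * Real.sinh (γ * t) * Real.cosh (γ * t)
      + K₁ ^ 2 * Real.sinh (γ * t) ^ 2)
    (hQpos : ∀ t, Q t > 0)
    (hω : ∀ t, ω t = 2 * Real.sqrt (2 * h / J) *
      ((K₂ * Real.cosh (γ * t) ^ 2 - K₁ * Real.sinh (γ * t) * Real.cosh (γ * t)) / Q t))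
    (hv : ∀ t, v₁ t = σ * Real.sqrt (2 * h / M) *
      (((K₂ ^ 2 - 1) * Real.cosh (γ * t) ^ 2
        - 2 * K₁ * K₂ * Real.sinh (γ * t) * Real.cosh (γ * t)
        + K₁ ^ 2 * Real.sinh (γ * t) ^ 2) / Q t)) :
    Tendsto (fun t => v₁ t / ω t) atTop
      (nhds ((σ / 2) * Real.sqrt (J / M) * ((K₂ - K₁) ^ 2 - 1) / (K₂ - K₁))) ∧
    Tendsto (fun t => v₁ t / ω t) atBot
      (nhds ((σ / 2) * Real.sqrt (J / M) * ((K₂ + K₁) ^ 2 - 1) / (K₂ + K₁))) ∧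
    (K₂ ^ 2 - K₁ ^ 2 ≠ -1 →
      (σ / 2) * Real.sqrt (J / M) * ((K₂ - K₁) ^ 2 - 1) / (K₂ - K₁) ≠
      (σ / 2) * Real.sqrt (J / M) * ((K₂ + K₁) ^ 2 - 1) / (K₂ + K₁)) :=
  supercritical_limit_radii_general h J M γ σ K₁ K₂ hh hJ hM hγ hσ hK₁ hK₂₁ hK₂₂ Q ω v₁ hQpos hω hv
end

section
/- For the subcritical solution ω(t) = 2√(2h/J)(K₂cos²(γt) + K₁ sin(γt)cos(γt))/P(t), where P(t) = (1+K₂²)cos²(γt) + 2K₁K₂ sin(γt)cos(γt) + K₁² sin²(γt), the function θ(t) = (2/γ)√(2h/J)·(θ₁(t)+θ₂(t)+θ₃(t))/(4K₁²K₂² + (1+K₂²−K₁²)²), with θ₁(t) = K₂(1+K₁²+K₂²)γt, θ₂(t) = (K₁/2)(K₁²+K₂²−1) ln P(t), θ₃(t) = −2K₁K₂ arctan(K₁ tan(γt) + K₂), satisfies θ'(t) = ω(t) at all t where tan(γt) is defined. -/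
/-!
On `cos x ≠ 0` the quadratic form `Q x = (1 + K₂²) cos² x + 2 K₁ K₂ sin x cos x + K₁² sin² x`
factors as `cos² x · (1 + (K₁ tan x + K₂)²)`, so it is positive and the arctan term differentiates
to `K₁ / Q x`. Differentiating the three terms of `θ` and clearing the common denominator `Q x`
leaves a polynomial identity in `sin x`, `cos x` that holds modulo `sin² x + cos² x = 1`.
-/

open Real

noncomputable section

def trigQuad (K₁ K₂ x : ℝ) : ℝ :=
  (1 + K₂ ^ 2) * cos x ^ 2 + 2 * K₁ * K₂ * sin x * cos x + K₁ ^ 2 * sin x ^ 2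

def thetaPrimitive (K₁ K₂ x : ℝ) : ℝ :=
  K₂ * (1 + K₁ ^ 2 + K₂ ^ 2) * x + K₁ / 2 * (K₁ ^ 2 + K₂ ^ 2 - 1) * log (trigQuad K₁ K₂ x)
    - 2 * K₁ * K₂ * arctan (K₁ * tan x + K₂)

end

variable {K₁ K₂ x : ℝ}

theorem trigQuad_eq_cos_sq_mul (hc : cos x ≠ 0) :
    trigQuad K₁ K₂ x = cos x ^ 2 * (1 + (K₁ * tan x + K₂) ^ 2) := by
  rw [trigQuad, tan_eq_sin_div_cos]
  field_simp
  ring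

theorem trigQuad_pos (hc : cos x ≠ 0) : 0 < trigQuad K₁ K₂ x := by
  rw [trigQuad_eq_cos_sq_mul hc]
  positivity

theorem hasDerivAt_trigQuad (K₁ K₂ x : ℝ) :
    HasDerivAt (trigQuad K₁ K₂)
      (2 * ((K₁ ^ 2 - 1 - K₂ ^ 2) * sin x * cos x + K₁ * K₂ * (cos x ^ 2 - sin x ^ 2))) x := by
  have h : HasDerivAt (trigQuad K₁ K₂) _ x :=
    ((((hasDerivAt_cos x).pow 2).const_mul (1 + K₂ ^ 2)).add
      (((hasDerivAt_sin x).const_mul (2 * K₁ * K₂)).mul (hasDerivAt_cos x))).add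
      (((hasDerivAt_sin x).pow 2).const_mul (K₁ ^ 2))
  exact h.congr_deriv (by ring)

theorem hasDerivAt_arctan_mul_tan_add (hc : cos x ≠ 0) :
    HasDerivAt (fun y ↦ arctan (K₁ * tan y + K₂)) (K₁ / trigQuad K₁ K₂ x) x := by
  have h := (((hasDerivAt_tan hc).const_mul K₁).add_const K₂).arctan
  refine h.congr_deriv ?_
  rw [trigQuad_eq_cos_sq_mul hc]
  field_simp

theorem hasDerivAt_thetaPrimitive (hc : cos x ≠ 0) :
    HasDerivAt (thetaPrimitive K₁ K₂)
      ((4 * K₁ ^ 2 * K₂ ^ 2 + (1 + K₂ ^ 2 - K₁ ^ 2) ^ 2) *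
        ((K₂ * cos x ^ 2 + K₁ * sin x * cos x) / trigQuad K₁ K₂ x)) x := by
  have hQ := (trigQuad_pos (K₁ := K₁) (K₂ := K₂) hc).ne'
  have h : HasDerivAt (thetaPrimitive K₁ K₂) _ x :=
    (((hasDerivAt_id x).const_mul (K₂ * (1 + K₁ ^ 2 + K₂ ^ 2))).add
      (((hasDerivAt_trigQuad K₁ K₂ x).log hQ).const_mul (K₁ / 2 * (K₁ ^ 2 + K₂ ^ 2 - 1)))).sub
      ((hasDerivAt_arctan_mul_tan_add hc).const_mul (2 * K₁ * K₂))
  refine h.congr_deriv ?_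
  field_simp
  rw [trigQuad]
  linear_combination 2 * K₁ ^ 2 * K₂ * sin_sq_add_cos_sq x

theorem subcritical_theta_antiderivative_general
    (h J γ K₁ K₂ : ℝ) (hγ : γ > 0)
    (hden : 4 * K₁ ^ 2 * K₂ ^ 2 + (1 + K₂ ^ 2 - K₁ ^ 2) ^ 2 ≠ 0)
    (P ω θ : ℝ → ℝ)
    (hP : ∀ t, P t = (1 + K₂ ^ 2) * Real.cos (γ * t) ^ 2
      + 2 * K₁ * K₂ * Real.sin (γ * t) * Real.cos (γ * t)
      + K₁ ^ 2 * Real.sin (γ * t) ^ 2)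
    (hω : ∀ t, ω t = 2 * Real.sqrt (2 * h / J) *
      ((K₂ * Real.cos (γ * t) ^ 2 + K₁ * Real.sin (γ * t) * Real.cos (γ * t)) / P t))
    (hθ : ∀ t, θ t = (2 / γ) * Real.sqrt (2 * h / J) *
      ((K₂ * (1 + K₁ ^ 2 + K₂ ^ 2) * (γ * t)
        + (K₁ / 2) * (K₁ ^ 2 + K₂ ^ 2 - 1) * Real.log (P t)
        - 2 * K₁ * K₂ * Real.arctan (K₁ * Real.tan (γ * t) + K₂)) /
        (4 * K₁ ^ 2 * K₂ ^ 2 + (1 + K₂ ^ 2 - K₁ ^ 2) ^ 2))) :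
    ∀ t, Real.cos (γ * t) ≠ 0 → HasDerivAt θ (ω t) t := by
  intro t hc
  have hPQ : ∀ s, P s = trigQuad K₁ K₂ (γ * s) := hP
  have hθ' : θ = fun s ↦ 2 / γ * √(2 * h / J) * (thetaPrimitive K₁ K₂ (γ * s) /
      (4 * K₁ ^ 2 * K₂ ^ 2 + (1 + K₂ ^ 2 - K₁ ^ 2) ^ 2)) := by
    ext s
    rw [hθ, hPQ]
    rfl
  rw [hθ']
  refine ((((hasDerivAt_thetaPrimitive hc).comp t ((hasDerivAt_id t).const_mul γ)).div_const
    _).const_mul (2 / γ * √(2 * h / J))).congr_deriv ?_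
  rw [hω, hPQ]
  field_simp

theorem subcritical_theta_antiderivative
    (h J γ K₁ K₂ : ℝ) (hh : h > 0) (hJ : J > 0) (hγ : γ > 0) (hK₁ : K₁ ≠ 0)
    (hden : 4 * K₁ ^ 2 * K₂ ^ 2 + (1 + K₂ ^ 2 - K₁ ^ 2) ^ 2 ≠ 0)
    (P ω θ : ℝ → ℝ)
    (hP : ∀ t, P t = (1 + K₂ ^ 2) * Real.cos (γ * t) ^ 2
      + 2 * K₁ * K₂ * Real.sin (γ * t) * Real.cos (γ * t)
      + K₁ ^ 2 * Real.sin (γ * t) ^ 2)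
    (hPpos : ∀ t, P t > 0)
    (hω : ∀ t, ω t = 2 * Real.sqrt (2 * h / J) *
      ((K₂ * Real.cos (γ * t) ^ 2 + K₁ * Real.sin (γ * t) * Real.cos (γ * t)) / P t))
    (hθ : ∀ t, θ t = (2 / γ) * Real.sqrt (2 * h / J) *
      ((K₂ * (1 + K₁ ^ 2 + K₂ ^ 2) * (γ * t)
        + (K₁ / 2) * (K₁ ^ 2 + K₂ ^ 2 - 1) * Real.log (P t)
        - 2 * K₁ * K₂ * Real.arctan (K₁ * Real.tan (γ * t) + K₂)) /
        (4 * K₁ ^ 2 * K₂ ^ 2 + (1 + K₂ ^ 2 - K₁ ^ 2) ^ 2))) :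
    ∀ t, Real.cos (γ * t) ≠ 0 → HasDerivAt θ (ω t) t :=
  subcritical_theta_antiderivative_general h J γ K₁ K₂ hγ hden P ω θ hP hω hθ
end
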